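/- If x ≥ 0 and t ≥ 5 are real numbers with t ≥ 2x + 5, then ∑_{k=1}^∞ 1/(F^∘k(t) + 1) < 3e^{−t} and ∑_{k=1}^∞ F^∘k(x)/(F^∘k(t) + 1) < (e^x + 1)e^{−t}. Moreover, for every n ≥ 1 and every t ≥ 0, (d/dt) F^∘n(t) = ∏_{k=1}^n (F^∘k(t) + 1), and there exists T > 0 such that for all t ≥ T and all n ≥ 1, (F^∘n)'(t)/(F^∘n(t) + 1)² ≤ 1/(F^∘n(t − 1) + 1). -/

import Mathlib

open Filter Topology Set MeasureTheory
open scoped ENNReal Real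

noncomputable section

/-- The exponential family `E_κ(z) = exp (z + κ)`. -/
def Ek (κ : ℂ) (z : ℂ) : ℂ := Complex.exp (z + κ)

/-- The model function `F(t) = e^t - 1` for exponential growth. -/
def F (t : ℝ) : ℝ := Real.exp t - 1

/-- The inverse of `F` on the nonnegative reals. -/
def Finv (t : ℝ) : ℝ := Real.log (t + 1)

/-- The shift map `σ` on integer sequences; the sequence `s : ℕ → ℤ` represents
`(s_1, s_2, …)` with `s_{k+1} = s k`. -/
def shiftSeq (s : ℕ → ℤ) : ℕ → ℤ := fun n => s (n + 1)

/-- Exponentially bounded sequences (membership in `S_0`). -/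
def expBounded (s : ℕ → ℤ) : Prop := ∃ x > 0, ∀ k : ℕ, |(s k : ℝ)| ≤ F^[k] x

/-- `t_s^* = sup_{n ≥ 1} F^{∘(-n+1)}(|s_n|)`, as an extended nonnegative real. -/
def tstar (s : ℕ → ℤ) : ℝ≥0∞ := ⨆ n : ℕ, ENNReal.ofReal (Finv^[n] |(s n : ℝ)|)

/-- `t_s^*` as a real number (for exponentially bounded `s`). -/
def tstarR (s : ℕ → ℤ) : ℝ := (tstar s).toReal

/-- The minimal potential `t_s`. -/
def tmin (s : ℕ → ℤ) : ℝ≥0∞ :=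
  sInf { y : ℝ≥0∞ | ∃ x : ℝ, 0 < x ∧ y = ENNReal.ofReal x ∧
    Filter.limsup (fun n => ENNReal.ofReal (|(s n : ℝ)| / F^[n] x)) Filter.atTop = 0 }

/-- The slit plane `ℂ' = ℂ ∖ (-∞, 0]`. -/
def Cprime : Set ℂ := {z : ℂ | 0 < z.re ∨ z.im ≠ 0}

/-- The inverse branch `L_{κ,j}(z) = Log z - κ + 2πij`. -/
def Lk (κ : ℂ) (j : ℤ) (z : ℂ) : ℂ :=
  Complex.log z - κ + 2 * (Real.pi : ℂ) * Complex.I * (j : ℂ)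

/-- The pullback approximants `g^n_{κ,s}(t) = L_{κ,s_1} ∘ ⋯ ∘ L_{κ,s_n}(F^∘n(t))`. -/
def gApprox (κ : ℂ) : ℕ → (ℕ → ℤ) → ℝ → ℂ
  | 0, _, t => (t : ℂ)
  | n + 1, s, t => Lk κ (s 0) (gApprox κ n (shiftSeq s) (F t))

/-- All intermediate values of the `n`-th pullback approximant lie in the slit plane. -/
def approxDefined (κ : ℂ) : ℕ → (ℕ → ℤ) → ℝ → Prop
  | 0, _, _ => True
  | n + 1, s, t => gApprox κ n (shiftSeq s) (F t) ∈ Cprime ∧ approxDefined κ n (shiftSeq s) (F t)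

/-- The pullback approximants at `(s, t)` are eventually defined and converge to `z`. -/
def RayTendsto (κ : ℂ) (s : ℕ → ℤ) (t : ℝ) (z : ℂ) : Prop :=
  (∀ᶠ n in Filter.atTop, approxDefined κ n s t) ∧
  Filter.Tendsto (fun n => gApprox κ n s t) Filter.atTop (nhds z)

/-- The dynamic ray of `E_κ` at address `s` is defined at potential `t`. -/
def RayDefinedAt (κ : ℂ) (s : ℕ → ℤ) (t : ℝ) : Prop := ∃ z, RayTendsto κ s t z

-- The dynamic ray `g_s^κ(t)` (junk value `0` where undefined).
open Classical in
def ray (κ : ℂ) (s : ℕ → ℤ) (t : ℝ) : ℂ :=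
  if h : ∃ z, RayTendsto κ s t z then h.choose else 0

/-- The set `𝒢_s(t)` of parameters `κ` for which the dynamic ray of `E_κ` at address `s`
is defined at potential `t` with `g_s^κ(t) = 0`. -/
def Gset (s : ℕ → ℤ) (t : ℝ) : Set ℂ :=
  {κ : ℂ | ∃ N : ℕ, RayTendsto κ (shiftSeq^[N] s) (F^[N] t) ((Ek κ)^[N] 0)}

/-- The set `I` of escaping parameters. -/
def escapingParams : Set ℂ :=
  {κ : ℂ | Filter.Tendsto (fun n => ‖(Ek κ)^[n] 0‖) Filter.atTop Filter.atTop}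

/-- The interval `(t_s, ∞)` of potentials. -/
def rayDomain (s : ℕ → ℤ) : Set ℝ := {t : ℝ | tmin s < ENNReal.ofReal t}

/-- `κ₀` is a simple root of the holomorphic map `κ ↦ g_s^κ(t)`. -/
def SimpleRoot (s : ℕ → ℤ) (t : ℝ) (κ₀ : ℂ) : Prop :=
  ray κ₀ s t = 0 ∧ RayDefinedAt κ₀ s t ∧
  ∃ U ∈ nhds κ₀, (∀ κ ∈ U, RayDefinedAt κ s t) ∧
    DifferentiableOn ℂ (fun κ => ray κ s t) U ∧
    deriv (fun κ => ray κ s t) κ₀ ≠ 0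

end

/-!
The iterates of `F` grow at least linearly from `2` on, so `1 / (F^∘(k+1)(t) + 1) = e^{-F^∘k(t)}`
is dominated by the geometric sequence `e^{-t-k}`. For the second sum, `F(a - b) ≤ F(a) - F(b)`
for `0 ≤ b ≤ a` shows that `F^∘k(t) - F^∘k(x) ≥ F^∘k(t - x)`, which again grows linearly.
For the derivative estimate, both sides are exponentials: writing `a_k = F^∘k(u)` and
`b_k = F^∘k(u - 1)`, the inequality becomes `∑_{k<m} a_k + b_m ≤ a_m`. Since `a_{k+1} ≥ 2 a_k`,
the sum is at most `a_m`, and `b_m ≤ a_m - 1` leaves room for the remaining `a_m`.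
-/

open Real Finset

lemma F_add_one (v : ℝ) : F v + 1 = exp v := by simp [F]

lemma iterate_succ_F_add_one (k : ℕ) (v : ℝ) : F^[k + 1] v + 1 = exp (F^[k] v) := by
  rw [Function.iterate_succ_apply', F_add_one]

lemma monotone_F : Monotone F := fun _ _ h => by simpa [F] using exp_le_exp.2 h

lemma le_iterate_F (k : ℕ) (v : ℝ) : v ≤ F^[k] v :=
  Function.id_le_iterate_of_id_le (fun v => by simp only [F, id]; linarith [add_one_le_exp v]) k v

lemma add_one_le_F {v : ℝ} (hv : 2 ≤ v) : v + 1 ≤ F v := by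
  nlinarith [quadratic_le_exp_of_nonneg (by linarith : 0 ≤ v), F_add_one v]

lemma add_nat_le_iterate_F {v : ℝ} (hv : 2 ≤ v) (k : ℕ) : v + k ≤ F^[k] v := by
  induction k with
  | zero => simp
  | succ k ih =>
    rw [Function.iterate_succ_apply']
    have := add_one_le_F (hv.trans (le_iterate_F k v))
    push_cast
    linarith

lemma two_mul_le_F {v : ℝ} (hv : 2 ≤ v) : 2 * v ≤ F v := by
  nlinarith [quadratic_le_exp_of_nonneg (by linarith : 0 ≤ v), F_add_one v]

lemma F_sub_le_F_sub_F {a b : ℝ} (hb : 0 ≤ b) (hba : b ≤ a) : F (a - b) ≤ F a - F b := by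
  have h1 : 1 ≤ exp b := one_le_exp hb
  have h2 : 1 ≤ exp (a - b) := one_le_exp (by linarith)
  have h3 : exp a = exp b * exp (a - b) := by rw [← exp_add]; ring_nf
  simp only [F]
  nlinarith

lemma iterate_F_sub_le {a b : ℝ} (hb : 0 ≤ b) (hba : b ≤ a) (k : ℕ) :
    F^[k] (a - b) ≤ F^[k] a - F^[k] b := by
  induction k with
  | zero => simp
  | succ k ih =>
    simp only [Function.iterate_succ_apply']
    calc F (F^[k] (a - b)) ≤ F (F^[k] a - F^[k] b) := monotone_F ih
      _ ≤ F (F^[k] a) - F (F^[k] b) :=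
        F_sub_le_F_sub_F (hb.trans (le_iterate_F k b)) (monotone_F.iterate k hba)

lemma F_add_one_le_F_add_one {v : ℝ} (hv : 0 ≤ v) : F v + 1 ≤ F (v + 1) := by
  have h : exp (v + 1) = exp v * exp 1 := exp_add v 1
  simp only [F]
  nlinarith [one_le_exp hv, add_one_le_exp (1 : ℝ)]

lemma iterate_F_add_one_le {v : ℝ} (hv : 0 ≤ v) (k : ℕ) : F^[k] v + 1 ≤ F^[k] (v + 1) := by
  induction k with
  | zero => simp
  | succ k ih =>
    simp only [Function.iterate_succ_apply']
    exact (F_add_one_le_F_add_one (hv.trans (le_iterate_F k v))).trans (monotone_F ih)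

lemma summable_and_tsum_lt_of_le_exp {f : ℕ → ℝ} {s : ℝ} (h0 : ∀ k, 0 ≤ f k)
    (hf : ∀ k, f k ≤ exp (-s) * exp (-1) ^ k) : Summable f ∧ ∑' k, f k < 2 * exp (-s) := by
  have hr0 : 0 ≤ exp (-1) := (exp_pos _).le
  have hr : exp (-1) < 1 / 2 := exp_neg_one_lt_half
  have hgeo := (summable_geometric_of_lt_one hr0 (by linarith)).mul_left (exp (-s))
  have hf_sum : Summable f := Summable.of_nonneg_of_le h0 hf hgeo
  refine ⟨hf_sum, ?_⟩
  have hinv : (1 - exp (-1))⁻¹ < 2 := by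
    rw [inv_lt_comm₀ (by linarith) two_pos]; linarith
  calc ∑' k, f k ≤ ∑' k, exp (-s) * exp (-1) ^ k := hf_sum.tsum_le_tsum hf hgeo
    _ = exp (-s) * (1 - exp (-1))⁻¹ := by
      rw [tsum_mul_left, tsum_geometric_of_lt_one hr0 (by linarith)]
    _ < 2 * exp (-s) := by nlinarith [exp_pos (-s)]

lemma exp_neg_add_nat (s : ℝ) (k : ℕ) : exp (-(s + k)) = exp (-s) * exp (-1) ^ k := by
  rw [← exp_nat_mul, ← exp_add]; ring_nf

lemma one_div_iterate_succ_F_le {t : ℝ} (ht : 2 ≤ t) (k : ℕ) :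
    1 / (F^[k + 1] t + 1) ≤ exp (-t) * exp (-1) ^ k := by
  rw [iterate_succ_F_add_one, one_div, ← exp_neg, ← exp_neg_add_nat]
  exact exp_le_exp.2 (by linarith [add_nat_le_iterate_F ht k])

lemma iterate_succ_F_div_le (x t : ℝ) (k : ℕ) :
    F^[k + 1] x / (F^[k + 1] t + 1) ≤ exp (F^[k] x - F^[k] t) := by
  have hnum : F^[k + 1] x ≤ exp (F^[k] x) := by linarith [iterate_succ_F_add_one k x]
  rw [exp_sub, iterate_succ_F_add_one]
  gcongr

lemma add_nat_le_iterate_F_sub {x t : ℝ} (hx : 0 ≤ x) (hxt : 2 * x + 5 ≤ t) (k : ℕ) :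
    t + (k + 1 : ℕ) ≤ F^[k + 1] t - F^[k + 1] x := by
  have hF : t + 1 ≤ F (t - x) := by
    nlinarith [quadratic_le_exp_of_nonneg (by linarith : 0 ≤ t - x), F_add_one (t - x)]
  calc t + (k + 1 : ℕ) = (t + 1) + k := by push_cast; ring
    _ ≤ F^[k] (t + 1) := add_nat_le_iterate_F (by linarith) k
    _ ≤ F^[k] (F (t - x)) := monotone_F.iterate k hF
    _ ≤ F^[k + 1] t - F^[k + 1] x := iterate_F_sub_le hx (by linarith) (k + 1)

lemma hasDerivAt_iterate_F (n : ℕ) (u : ℝ) :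
    HasDerivAt (F^[n]) (∏ k ∈ Icc 1 n, (F^[k] u + 1)) u := by
  induction n with
  | zero => simpa using hasDerivAt_id u
  | succ m ih =>
    rw [Function.iterate_succ' F m, prod_Icc_succ_top (by omega), iterate_succ_F_add_one, mul_comm]
    exact ((hasDerivAt_exp _).sub_const 1).comp u ih

lemma prod_Icc_iterate_F_add_one (n : ℕ) (u : ℝ) :
    ∏ k ∈ Icc 1 n, (F^[k] u + 1) = exp (∑ k ∈ range n, F^[k] u) := by
  induction n with
  | zero => simp
  | succ m ih =>
    rw [prod_Icc_succ_top (by omega), ih, sum_range_succ, exp_add, iterate_succ_F_add_one]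

lemma sum_range_iterate_F_le {u : ℝ} (hu : 2 ≤ u) (m : ℕ) :
    ∑ k ∈ range m, F^[k] u ≤ F^[m] u := by
  induction m with
  | zero => simpa using hu.trans' zero_le_two
  | succ m ih =>
    rw [sum_range_succ, Function.iterate_succ_apply']
    linarith [two_mul_le_F (hu.trans (le_iterate_F m u))]

lemma two_mul_add_F_sub_one_le {a : ℝ} (ha : 4 ≤ a) : 2 * a + F (a - 1) ≤ F a := by
  have h : exp a = exp (a - 1) * exp 1 := by rw [← exp_add]; ring_nf
  simp only [F]
  nlinarith [quadratic_le_exp_of_nonneg (by linarith : 0 ≤ a - 1), add_one_le_exp (1 : ℝ),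
    exp_pos (a - 1)]

lemma sum_range_iterate_F_add_iterate_F_sub_one_le {u : ℝ} (hu : 4 ≤ u) (m : ℕ) :
    ∑ k ∈ range m, F^[k] u + F^[m] (u - 1) ≤ F^[m] u := by
  cases m with
  | zero => simp
  | succ m =>
    have hsum := sum_range_iterate_F_le (by linarith) m
    have hgap : F^[m] (u - 1) ≤ F^[m] u - 1 := by
      have h := iterate_F_add_one_le (by linarith : 0 ≤ u - 1) m
      rw [sub_add_cancel] at h
      linarith
    rw [sum_range_succ, Function.iterate_succ_apply', Function.iterate_succ_apply']
    linarith [monotone_F hgap, two_mul_add_F_sub_one_le (hu.trans (le_iterate_F m u))]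

lemma deriv_iterate_F_div_le {u : ℝ} (hu : 4 ≤ u) (n : ℕ) (hn : 1 ≤ n) :
    deriv (F^[n]) u / (F^[n] u + 1) ^ 2 ≤ 1 / (F^[n] (u - 1) + 1) := by
  obtain ⟨m, rfl⟩ := Nat.exists_eq_add_of_le' hn
  rw [(hasDerivAt_iterate_F _ u).deriv, prod_Icc_iterate_F_add_one, sum_range_succ,
    iterate_succ_F_add_one, iterate_succ_F_add_one,
    div_le_div_iff₀ (by positivity) (by positivity), one_mul, sq, ← exp_add, ← exp_add]
  exact exp_le_exp.2 (by linarith [sum_range_iterate_F_add_iterate_F_sub_one_le hu m])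

lemma summable_and_tsum_iterate_F_div_lt {x t : ℝ} (hx : 0 ≤ x) (hxt : 2 * x + 5 ≤ t) :
    Summable (fun k : ℕ => F^[k + 1] x / (F^[k + 1] t + 1)) ∧
      ∑' k : ℕ, F^[k + 1] x / (F^[k + 1] t + 1) < (exp x + 1) * exp (-t) := by
  set g := fun k : ℕ => F^[k + 1] x / (F^[k + 1] t + 1)
  have hg0 : ∀ k, 0 ≤ g k := fun k => div_nonneg (hx.trans (le_iterate_F _ _))
    (by rw [iterate_succ_F_add_one]; positivity)
  have hg_tail : ∀ k, g (k + 1) ≤ exp (-(t + 1)) * exp (-1) ^ k := fun k => by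
    rw [← exp_neg_add_nat]
    refine (iterate_succ_F_div_le x t (k + 1)).trans (exp_le_exp.2 ?_)
    have h := add_nat_le_iterate_F_sub hx hxt k
    push_cast at h ⊢
    linarith
  obtain ⟨hs_tail, hlt_tail⟩ := summable_and_tsum_lt_of_le_exp (fun k => hg0 (k + 1)) hg_tail
  have hs : Summable g := (summable_nat_add_iff 1).1 hs_tail
  have hg_head : g 0 ≤ exp x * exp (-t) := by
    simpa [g, ← exp_add, sub_eq_add_neg] using iterate_succ_F_div_le x t 0
  have htail_le : 2 * exp (-(t + 1)) ≤ exp (-t) := by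
    rw [neg_add, exp_add]
    nlinarith [exp_neg_one_lt_half, exp_pos (-t)]
  refine ⟨hs, ?_⟩
  rw [hs.tsum_eq_zero_add]
  linarith

theorem properties_of_F_general (x t : ℝ) (hx : 0 ≤ x) (hxt : 2 * x + 5 ≤ t) :
    (Summable (fun k : ℕ => 1 / (F^[k + 1] t + 1)) ∧
      ∑' k : ℕ, 1 / (F^[k + 1] t + 1) < 3 * Real.exp (-t)) ∧
    (Summable (fun k : ℕ => F^[k + 1] x / (F^[k + 1] t + 1)) ∧
      ∑' k : ℕ, F^[k + 1] x / (F^[k + 1] t + 1) < (Real.exp x + 1) * Real.exp (-t)) ∧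
    (∀ n : ℕ, 1 ≤ n → ∀ u : ℝ, 0 ≤ u →
      HasDerivAt (F^[n]) (∏ k ∈ Finset.Icc 1 n, (F^[k] u + 1)) u) ∧
    (∃ T : ℝ, 0 < T ∧ ∀ u : ℝ, T ≤ u → ∀ n : ℕ, 1 ≤ n →
      deriv (F^[n]) u / (F^[n] u + 1) ^ 2 ≤ 1 / (F^[n] (u - 1) + 1)) := by
  obtain ⟨hs₁, hlt₁⟩ := summable_and_tsum_lt_of_le_exp
    (fun k => one_div_nonneg.2 (by rw [iterate_succ_F_add_one]; positivity))
    (one_div_iterate_succ_F_le (by linarith))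
  exact ⟨⟨hs₁, by linarith [exp_pos (-t)]⟩, summable_and_tsum_iterate_F_div_lt hx hxt,
    fun n _ u _ => hasDerivAt_iterate_F n u,
    4, by norm_num, fun u hu n hn => deriv_iterate_F_div_le hu n hn⟩

/-- **Some Properties of `F`.**
If `x ≥ 0`, `t ≥ 5` and `t ≥ 2x + 5`, then `∑_{k≥1} 1/(F^∘k(t)+1) < 3e^{-t}` and
`∑_{k≥1} F^∘k(x)/(F^∘k(t)+1) < (e^x+1)e^{-t}`. Moreover
`(F^∘n)'(u) = ∏_{k=1}^n (F^∘k(u)+1)`, and there is `T > 0` such that for all `u ≥ T` and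
`n ≥ 1`, `(F^∘n)'(u)/(F^∘n(u)+1)² ≤ 1/(F^∘n(u-1)+1)`. -/
theorem properties_of_F (x t : ℝ) (hx : 0 ≤ x) (ht : 5 ≤ t) (hxt : 2 * x + 5 ≤ t) :
    (Summable (fun k : ℕ => 1 / (F^[k + 1] t + 1)) ∧
      ∑' k : ℕ, 1 / (F^[k + 1] t + 1) < 3 * Real.exp (-t)) ∧
    (Summable (fun k : ℕ => F^[k + 1] x / (F^[k + 1] t + 1)) ∧
      ∑' k : ℕ, F^[k + 1] x / (F^[k + 1] t + 1) < (Real.exp x + 1) * Real.exp (-t)) ∧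
    (∀ n : ℕ, 1 ≤ n → ∀ u : ℝ, 0 ≤ u →
      HasDerivAt (F^[n]) (∏ k ∈ Finset.Icc 1 n, (F^[k] u + 1)) u) ∧
    (∃ T : ℝ, 0 < T ∧ ∀ u : ℝ, T ≤ u → ∀ n : ℕ, 1 ≤ n →
      deriv (F^[n]) u / (F^[n] u + 1) ^ 2 ≤ 1 / (F^[n] (u - 1) + 1)) :=
  properties_of_F_general x t hx hxt
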